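/- In the zero-bracket condition 2r₁³(μ₁−μ₂)(μ₃−μ₂) − r₂³(2μ₂+μ₁)(2μ₃+μ₂) = 0 with μ₁ = μ₃ = μ₀ > 0 and 0 < r₁ < r₂, any real solution μ₂ must be negative. -/

import Mathlib

/-! Since `(2b + a)(2a + b) = 2(a - b)² + 9ab`, the bracket equals
`-(2(r₂³ - r₁³)(μ₀ - μ₂)² + 9 r₂³ μ₀ μ₂)`. For `μ₂ ≥ 0` both summands are nonnegative, and they
cannot both vanish: the second forces `μ₂ = 0`, and then the first is `2(r₂³ - r₁³)μ₀² > 0`. -/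

theorem two_mul_sq_sub_sub_mul_eq {R : Type*} [CommRing R] (a b c d : R) :
    2 * c * (a - b) * (a - b) - d * (2 * b + a) * (2 * a + b)
      = -(2 * (d - c) * (a - b) ^ 2 + 9 * d * a * b) := by
  ring

theorem two_mul_sq_sub_sub_mul_neg {a b c d : ℝ} (ha : 0 < a) (hb : 0 ≤ b) (hcd : c < d)
    (hd : 0 < d) :
    2 * c * (a - b) * (a - b) - d * (2 * b + a) * (2 * a + b) < 0 := by
  rw [two_mul_sq_sub_sub_mul_eq, neg_neg_iff_pos]
  have hdc : 0 < d - c := sub_pos.mpr hcd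
  rcases hb.eq_or_lt with rfl | hb
  · simp only [sub_zero, mul_zero, add_zero]
    positivity
  · have : 0 < 9 * d * a * b := by positivity
    have : 0 ≤ 2 * (d - c) * (a - b) ^ 2 := by positivity
    linarith

/-- For the matching condition 2r₁³(μ₁−μ₂)(μ₃−μ₂) − r₂³(2μ₂+μ₁)(2μ₃+μ₂) = 0 with
μ₁ = μ₃ = μ₀ > 0 and 0 < r₁ < r₂, any real solution μ₂ is negative. -/
theorem stmt_13 (μ₀ r₁ r₂ μ₂ : ℝ) (hμ₀ : 0 < μ₀) (hr₁ : 0 < r₁) (hr : r₁ < r₂)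
    (heq : 2 * r₁ ^ 3 * (μ₀ - μ₂) * (μ₀ - μ₂)
      - r₂ ^ 3 * (2 * μ₂ + μ₀) * (2 * μ₀ + μ₂) = 0) :
    μ₂ < 0 := by
  by_contra! hμ₂
  have hr₃ : r₁ ^ 3 < r₂ ^ 3 := pow_lt_pow_left₀ hr hr₁.le three_ne_zero
  have hr₂ : 0 < r₂ ^ 3 := pow_pos (hr₁.trans hr) 3
  exact (two_mul_sq_sub_sub_mul_neg hμ₀ hμ₂ hr₃ hr₂).ne heq
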